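/- Let Δ > 0, let b : ℤ → ℝ and φ : ℝ → ℝ be such that (|b| ⋆ |φ|)(t) = Σ_{s∈ℤ} |b(s)||φ(t − sΔ)| is finite for a.e. t, and suppose G(t) := Σ_{s∈ℤ} |φ(t + sΔ)| (|b| ⋆ |φ|)(t + sΔ) defines a function in L²([0, Δ]). Define c(t, s, u) = ∫_ℝ φ(tΔ + v) φ(sΔ + v) φ(uΔ + v) φ(v) dv. Then Σ_{t∈ℤ} Σ_{s∈ℤ} Σ_{u∈ℤ} |b(t) b(s) c(t + u, s, u)| ≤ ∫_0^Δ G(v)² dv < ∞. -/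

import Mathlib

open MeasureTheory Set ENNReal

/-!
Write `F = |φ|`, `H(v) = ∑ₛ |b s| F(v + sΔ)` and let `P(v) = ∑ₖ (F H)(v + kΔ)` be the
`Δ`-periodization of `F H`. Expanding the product, the triple sum is at most
`∫_ℝ F(v) H(v) P(v) dv`. Since `P` is `Δ`-periodic, folding `ℝ` onto `(0, Δ]` bounds this by
`∫₀^Δ P²`, and reindexing the double sum defining `P` shows `P = G`.
-/

theorem MeasureTheory.tsum_lintegral_le_lintegral_tsum {α ι : Type*} [MeasurableSpace α]
    (μ : Measure α) (f : ι → α → ℝ≥0∞) :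
    ∑' i, ∫⁻ a, f i a ∂μ ≤ ∫⁻ a, ∑' i, f i a ∂μ := by
  rw [ENNReal.tsum_eq_iSup_sum]
  refine iSup_le fun s => ?_
  calc ∑ i ∈ s, ∫⁻ a, f i a ∂μ ≤ ∫⁻ a, ∑ i ∈ s, f i a ∂μ := ?_
    _ ≤ ∫⁻ a, ∑' i, f i a ∂μ := lintegral_mono fun a => ENNReal.sum_le_tsum s
  induction s using Finset.cons_induction with
  | empty => simp
  | cons i s hi ih =>
    simp only [Finset.sum_cons]
    exact (add_le_add_right ih _).trans (le_lintegral_add _ _)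

theorem lintegral_eq_tsum_setLIntegral_Ioc {Δ : ℝ} (hΔ : 0 < Δ) (f : ℝ → ℝ≥0∞) :
    ∫⁻ x, f x = ∑' k : ℤ, ∫⁻ x in Ioc 0 Δ, f (x + k * Δ) := by
  let e : ℤ ≃ AddSubgroup.zmultiples Δ := Equiv.ofBijective
    (fun k => ⟨k * Δ, by simp⟩)
    ⟨fun k l h => by simpa [hΔ.ne'] using! congrArg Subtype.val h, fun ⟨x, hx⟩ => by
      obtain ⟨k, rfl⟩ := AddSubgroup.mem_zmultiples_iff.1 hx
      exact ⟨k, by simp⟩⟩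
  rw [(isAddFundamentalDomain_Ioc hΔ 0 volume).lintegral_eq_tsum'' f, zero_add, ← e.tsum_eq]
  simp only [AddSubgroup.vadd_def, vadd_eq_add, add_comm]
  rfl

noncomputable def periodize (Δ : ℝ) (f : ℝ → ℝ≥0∞) (x : ℝ) : ℝ≥0∞ :=
  ∑' k : ℤ, f (x + k * Δ)

theorem periodic_periodize (Δ : ℝ) (f : ℝ → ℝ≥0∞) : Function.Periodic (periodize Δ f) Δ := by
  intro x
  rw [periodize, periodize, ← (Equiv.addRight (1 : ℤ)).tsum_eq (fun k : ℤ => f (x + k * Δ))]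
  refine tsum_congr fun k => ?_
  simp only [Equiv.coe_addRight, Int.cast_add, Int.cast_one]
  ring_nf

theorem lintegral_mul_le_setLIntegral_periodize_mul {Δ : ℝ} (hΔ : 0 < Δ) {g : ℝ → ℝ≥0∞}
    (hg : Function.Periodic g Δ) (f : ℝ → ℝ≥0∞) :
    ∫⁻ x, f x * g x ≤ ∫⁻ x in Ioc 0 Δ, periodize Δ f x * g x := by
  calc ∫⁻ x, f x * g x = ∑' k : ℤ, ∫⁻ x in Ioc 0 Δ, f (x + k * Δ) * g x := by
        rw [lintegral_eq_tsum_setLIntegral_Ioc hΔ]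
        exact tsum_congr fun k => lintegral_congr fun x => by rw [hg.int_mul k x]
    _ ≤ ∫⁻ x in Ioc 0 Δ, ∑' k : ℤ, f (x + k * Δ) * g x := tsum_lintegral_le_lintegral_tsum _ _
    _ = ∫⁻ x in Ioc 0 Δ, periodize Δ f x * g x := by simp_rw [periodize, ENNReal.tsum_mul_right]

-- the discrete convolution `(|b| ⋆ |φ|)(x)` on the lattice `Δℤ`
noncomputable def latticeConv (β : ℤ → ℝ≥0∞) (F : ℝ → ℝ≥0∞) (Δ x : ℝ) : ℝ≥0∞ :=
  ∑' u : ℤ, β u * F (x - u * Δ)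

theorem periodize_mul_tsum_add_eq_latticeConv (β : ℤ → ℝ≥0∞) (F : ℝ → ℝ≥0∞) (Δ : ℝ) :
    periodize Δ (fun y => F y * ∑' s : ℤ, β s * F (y + s * Δ)) =
      periodize Δ (fun y => F y * latticeConv β F Δ y) := by
  funext x
  simp only [periodize, latticeConv, ← ENNReal.tsum_mul_left]
  rw [ENNReal.tsum_comm]
  conv_rhs => rw [ENNReal.tsum_comm]
  refine tsum_congr fun s => ?_
  rw [← (Equiv.addRight s).tsum_eq (fun k : ℤ => F (x + k * Δ) * (β s * F (x + k * Δ - s * Δ)))]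
  refine tsum_congr fun k => ?_
  simp only [Equiv.coe_addRight, Int.cast_add]
  rw [show x + (k + s) * Δ - s * Δ = x + k * Δ by ring,
    show x + k * Δ + s * Δ = x + (k + s) * Δ by ring]
  ring

theorem tsum_tsum_tsum_mul_eq_mul_periodize (β : ℤ → ℝ≥0∞) (F : ℝ → ℝ≥0∞) (Δ v : ℝ) :
    ∑' (t : ℤ) (s : ℤ) (u : ℤ), β t * β s *
        (F (((t + u : ℤ) : ℝ) * Δ + v) * F (s * Δ + v) * F (u * Δ + v) * F v) =
      F v * (∑' s : ℤ, β s * F (v + s * Δ)) *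
        periodize Δ (fun y => F y * ∑' s : ℤ, β s * F (y + s * Δ)) v := by
  calc ∑' (t : ℤ) (s : ℤ) (u : ℤ), β t * β s *
        (F (((t + u : ℤ) : ℝ) * Δ + v) * F (s * Δ + v) * F (u * Δ + v) * F v)
      = ∑' (t : ℤ) (s : ℤ) (u : ℤ), β s * F (v + s * Δ) *
          (F v * (F (v + u * Δ) * (β t * F (v + u * Δ + t * Δ)))) := by
        refine tsum_congr fun t => tsum_congr fun s => tsum_congr fun u => ?_
        rw [show ((t + u : ℤ) : ℝ) * Δ + v = v + u * Δ + t * Δ by push_cast; ring,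
          add_comm (s * Δ : ℝ), add_comm (u * Δ : ℝ)]
        ring
    _ = F v * (∑' s : ℤ, β s * F (v + s * Δ)) *
          ∑' u : ℤ, F (v + u * Δ) * ∑' t : ℤ, β t * F (v + u * Δ + t * Δ) := by
        simp_rw [ENNReal.tsum_mul_left, ENNReal.tsum_mul_right, ENNReal.tsum_mul_left]
        rw [ENNReal.tsum_comm]
        simp_rw [ENNReal.tsum_mul_left]
        ring

theorem tsum_mul_lintegral_le_setLIntegral_periodize_sq {Δ : ℝ} (hΔ : 0 < Δ) (β : ℤ → ℝ≥0∞)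
    (F : ℝ → ℝ≥0∞) :
    ∑' (t : ℤ) (s : ℤ) (u : ℤ), β t * β s *
        ∫⁻ v, F (((t + u : ℤ) : ℝ) * Δ + v) * F (s * Δ + v) * F (u * Δ + v) * F v ≤
      ∫⁻ x in Ioc 0 Δ, periodize Δ (fun y => F y * latticeConv β F Δ y) x ^ 2 := by
  set H : ℝ → ℝ≥0∞ := fun y => ∑' s : ℤ, β s * F (y + s * Δ)
  calc ∑' (t : ℤ) (s : ℤ) (u : ℤ), β t * β s *
        ∫⁻ v, F (((t + u : ℤ) : ℝ) * Δ + v) * F (s * Δ + v) * F (u * Δ + v) * F v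
      ≤ ∑' (t : ℤ) (s : ℤ) (u : ℤ), ∫⁻ v, β t * β s *
          (F (((t + u : ℤ) : ℝ) * Δ + v) * F (s * Δ + v) * F (u * Δ + v) * F v) := by
        gcongr
        exact lintegral_const_mul_le _ _
    _ ≤ ∫⁻ v, ∑' (t : ℤ) (s : ℤ) (u : ℤ), β t * β s *
          (F (((t + u : ℤ) : ℝ) * Δ + v) * F (s * Δ + v) * F (u * Δ + v) * F v) :=
        (ENNReal.tsum_le_tsum fun t => ENNReal.tsum_le_tsum fun s =>
          tsum_lintegral_le_lintegral_tsum _ _).trans <|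
        (ENNReal.tsum_le_tsum fun t => tsum_lintegral_le_lintegral_tsum _ _).trans <|
        tsum_lintegral_le_lintegral_tsum _ _
    _ = ∫⁻ v, (F v * H v) * periodize Δ (fun y => F y * H y) v :=
        lintegral_congr fun v => tsum_tsum_tsum_mul_eq_mul_periodize β F Δ v
    _ ≤ ∫⁻ x in Ioc 0 Δ,
          periodize Δ (fun y => F y * H y) x * periodize Δ (fun y => F y * H y) x :=
        lintegral_mul_le_setLIntegral_periodize_mul hΔ (periodic_periodize _ _) _
    _ = ∫⁻ x in Ioc 0 Δ, periodize Δ (fun y => F y * latticeConv β F Δ y) x ^ 2 := by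
        simp_rw [H, periodize_mul_tsum_add_eq_latticeConv, sq]

theorem stmt13_general (Δ : ℝ) (hΔ : 0 < Δ) (b : ℤ → ℝ) (φ : ℝ → ℝ)
    (hG : (∫⁻ t in Ioc (0 : ℝ) Δ,
        (∑' s : ℤ, ENNReal.ofReal |φ (t + (s : ℝ) * Δ)| *
          ∑' u : ℤ, ENNReal.ofReal (|b u| * |φ (t + (s : ℝ) * Δ - (u : ℝ) * Δ)|)) ^ 2) < ∞) :
    (∑' t : ℤ, ∑' s : ℤ, ∑' u : ℤ,
        ENNReal.ofReal |b t| * ENNReal.ofReal |b s| *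
          ∫⁻ v : ℝ, ENNReal.ofReal
            |φ (((t + u : ℤ) : ℝ) * Δ + v) * φ ((s : ℝ) * Δ + v) *
              φ ((u : ℝ) * Δ + v) * φ v|) ≤
      (∫⁻ t in Ioc (0 : ℝ) Δ,
        (∑' s : ℤ, ENNReal.ofReal |φ (t + (s : ℝ) * Δ)| *
          ∑' u : ℤ, ENNReal.ofReal (|b u| * |φ (t + (s : ℝ) * Δ - (u : ℝ) * Δ)|)) ^ 2) ∧
    (∑' t : ℤ, ∑' s : ℤ, ∑' u : ℤ,
        ENNReal.ofReal |b t| * ENNReal.ofReal |b s| *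
          ∫⁻ v : ℝ, ENNReal.ofReal
            |φ (((t + u : ℤ) : ℝ) * Δ + v) * φ ((s : ℝ) * Δ + v) *
              φ ((u : ℝ) * Δ + v) * φ v|) < ∞ := by
  have h := tsum_mul_lintegral_le_setLIntegral_periodize_sq hΔ (fun t => ENNReal.ofReal |b t|)
    (fun x => ENNReal.ofReal |φ x|)
  simp only [periodize, latticeConv] at h
  simp only [abs_mul, ENNReal.ofReal_mul' (abs_nonneg _)] at hG ⊢
  exact ⟨h, h.trans_lt hG⟩

/-- Absolute summability of the fourth-cumulant triple sum, bounded by the squared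
`L²([0,Δ])` norm of `G(t) = Σ_s |φ(t+sΔ)| (|b| ⋆ |φ|)(t+sΔ)`. -/
theorem stmt13 (Δ : ℝ) (hΔ : 0 < Δ) (b : ℤ → ℝ) (φ : ℝ → ℝ) (hφ : Measurable φ)
    (hfin : ∀ᵐ t : ℝ, (∑' s : ℤ, ENNReal.ofReal (|b s| * |φ (t - (s : ℝ) * Δ)|)) < ∞)
    (hG : (∫⁻ t in Ioc (0 : ℝ) Δ,
        (∑' s : ℤ, ENNReal.ofReal |φ (t + (s : ℝ) * Δ)| *
          ∑' u : ℤ, ENNReal.ofReal (|b u| * |φ (t + (s : ℝ) * Δ - (u : ℝ) * Δ)|)) ^ 2) < ∞) :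
    (∑' t : ℤ, ∑' s : ℤ, ∑' u : ℤ,
        ENNReal.ofReal |b t| * ENNReal.ofReal |b s| *
          ∫⁻ v : ℝ, ENNReal.ofReal
            |φ (((t + u : ℤ) : ℝ) * Δ + v) * φ ((s : ℝ) * Δ + v) *
              φ ((u : ℝ) * Δ + v) * φ v|) ≤
      (∫⁻ t in Ioc (0 : ℝ) Δ,
        (∑' s : ℤ, ENNReal.ofReal |φ (t + (s : ℝ) * Δ)| *
          ∑' u : ℤ, ENNReal.ofReal (|b u| * |φ (t + (s : ℝ) * Δ - (u : ℝ) * Δ)|)) ^ 2) ∧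
    (∑' t : ℤ, ∑' s : ℤ, ∑' u : ℤ,
        ENNReal.ofReal |b t| * ENNReal.ofReal |b s| *
          ∫⁻ v : ℝ, ENNReal.ofReal
            |φ (((t + u : ℤ) : ℝ) * Δ + v) * φ ((s : ℝ) * Δ + v) *
              φ ((u : ℝ) * Δ + v) * φ v|) < ∞ :=
  stmt13_general Δ hΔ b φ hG
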